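/- For λ > 0 and x ∈ ℝ with |x| ≠ √(2λ), the set of minimizers of u ↦ λ·𝟙[u ≠ 0] + (1/2)(u - x)² is the singleton {H_{√(2λ)}(x)}, where H_α(x) = x if |x| > α and 0 otherwise (hard thresholding). -/
import Mathlib


/-- The proximal operator of `λ·ℓ₀` on ℝ is hard-thresholding: for `|x| ≠ √(2λ)`,
the set of minimizers of `u ↦ λ·𝟙[u ≠ 0] + (1/2)(u - x)²` is the singleton
`{H_{√(2λ)}(x)}`, where `H_α(x) = x` if `|x| > α` and `0` otherwise. -/
theorem prox_l0_eq_hardThreshold (lam x : ℝ) (hlam : 0 < lam)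
    (hx : |x| ≠ Real.sqrt (2 * lam)) :
    {u : ℝ | ∀ w : ℝ,
        lam * (if u ≠ 0 then (1 : ℝ) else 0) + (1/2) * (u - x)^2 ≤
        lam * (if w ≠ 0 then (1 : ℝ) else 0) + (1/2) * (w - x)^2} =
      {if Real.sqrt (2 * lam) < |x| then x else 0} := by
  have hs2 : Real.sqrt (2 * lam) ^ 2 = 2 * lam := Real.sq_sqrt (by linarith)
  have hspos : 0 < Real.sqrt (2 * lam) := Real.sqrt_pos.2 (by linarith)
  ext u
  simp only [Set.mem_setOf_eq, Set.mem_singleton_iff, ne_eq]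
  rcases lt_or_gt_of_ne hx with hlt | hgt
  · -- |x| < √(2λ), minimizer is 0
    have hx2 : x ^ 2 < 2 * lam := by
      have h1 : |x| ^ 2 < Real.sqrt (2 * lam) ^ 2 := by
        nlinarith [abs_nonneg x]
      rw [sq_abs] at h1; linarith
    rw [if_neg (not_lt.2 hlt.le)]
    constructor
    · intro h
      by_contra hu
      have h0 := h 0
      rw [if_pos hu, if_neg (by simp)] at h0
      nlinarith [sq_nonneg (u - x)]
    · intro h w
      rw [h]
      by_cases hw : w = 0
      · subst hw; exact le_refl _
      · rw [if_neg (by simp), if_pos hw]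
        nlinarith [sq_nonneg (w - x)]
  · -- √(2λ) < |x|, minimizer is x
    have hx2 : 2 * lam < x ^ 2 := by
      have h1 : Real.sqrt (2 * lam) ^ 2 < |x| ^ 2 := by
        nlinarith [Real.sqrt_nonneg (2 * lam)]
      rw [sq_abs] at h1; linarith
    have hxne : x ≠ 0 := by
      intro h; rw [h, abs_zero] at hgt; linarith
    rw [if_pos hgt]
    constructor
    · intro h
      by_cases hu : u = 0
      · exfalso
        subst hu
        have hxx := h x
        rw [if_neg (by simp), if_pos hxne] at hxx
        · nlinarith
      · have hxx := h x
        rw [if_pos hu, if_pos hxne] at hxx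
        have : (u - x) ^ 2 ≤ 0 := by nlinarith
        have := pow_eq_zero_iff (n := 2) (by norm_num) |>.1
          (le_antisymm this (sq_nonneg _))
        linarith [sub_eq_zero.1 this]
    · intro h w
      rw [h, if_pos hxne]
      by_cases hw : w = 0
      · subst hw
        rw [if_neg (by simp)]
        nlinarith
      · rw [if_pos hw]
        nlinarith [sq_nonneg (w - x)]
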